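/- arXiv:1912.01575 — 3 statements merged into one kernel-verified Lean document; each statement's English description precedes it below -/
import Mathlib

section
/- For any d ≥ 2, any τ > d − 1 and any ω̃ ∈ Ω^{d−1}_τ, Lebesgue-almost every ω_d ∈ ℝ satisfies (ω̃, ω_d) ∈ Ω^d_τ; that is, the set of ω_d ∈ ℝ for which (ω̃, ω_d) ∉ Ω^d_τ has Lebesgue measure zero. -/
/-!
If `(ω̃, x)` is not Diophantine, then for every `γ ≤ γ₀` (the constant of `ω̃`) some `K ∈ ℤ^d`
has `|⟨ω̃, K̃⟩ + x K_d| < γ / ‖K‖^τ`, and the Diophantine property of `ω̃` forces `K_d ≠ 0`.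
So `x` lies in an interval of length `2γ / (‖K‖^τ |K_d|)`. Writing `τ = (d - 1) + d ε`, that
length is at most `2γ ∏ⱼ max(|K_j|, 1)^(-(1 + ε))`, which is summable over `ℤ^d` as a product
of one-dimensional `p`-series. Hence the bad set has measure `O(γ)` for all small `γ`.
-/

open Real Filter Set

noncomputable section

/-- `ω ∈ Ω^m_τ`: `ω` is Diophantine with exponent `τ` (for some constant `γ > 0`),
i.e. `|⟨ω, k⟩| ≥ γ/‖k‖^τ` for all nonzero integer vectors `k`. -/
def DiophVec {m : ℕ} (τ : ℝ) (ω : Fin m → ℝ) : Prop :=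
  ∃ γ : ℝ, 0 < γ ∧ ∀ k : Fin m → ℤ, k ≠ 0 → γ / ‖k‖ ^ τ ≤ |∑ i, ω i * (k i : ℝ)|

open Topology MeasureTheory

lemma one_le_norm_of_int_ne_zero {ι : Type*} [Fintype ι] {k : ι → ℤ} (hk : k ≠ 0) :
    1 ≤ ‖k‖ := by
  obtain ⟨i, hi⟩ := Function.ne_iff.mp hk
  calc (1 : ℝ) ≤ ‖k i‖ := by rw [Int.norm_eq_abs]; exact_mod_cast Int.one_le_abs hi
    _ ≤ ‖k‖ := norm_le_pi_norm k i

lemma prod_rpow_one_add_le {n : ℕ} {a : Fin (n + 1) → ℝ} {N ε : ℝ} (ha : ∀ j, 0 ≤ a j)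
    (haN : ∀ j, a j ≤ N) (hε : 0 ≤ ε) :
    ∏ j, a j ^ (1 + ε) ≤ N ^ (n + (n + 1) * ε) * a (Fin.last n) := by
  have hN : 0 ≤ N := (ha _).trans (haN (Fin.last n))
  have hinit : ∏ i : Fin n, a i.castSucc ^ (1 + ε) ≤ N ^ (n * (1 + ε)) := by
    calc ∏ i : Fin n, a i.castSucc ^ (1 + ε) ≤ ∏ _i : Fin n, N ^ (1 + ε) :=
          Finset.prod_le_prod (fun i _ => Real.rpow_nonneg (ha _) _)
            fun i _ => Real.rpow_le_rpow (ha _) (haN _) (by linarith)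
      _ = N ^ (n * (1 + ε)) := by
          rw [Finset.prod_const, Finset.card_fin, mul_comm, Real.rpow_mul hN, Real.rpow_natCast]
  have hlast : a (Fin.last n) ^ ε ≤ N ^ ε := Real.rpow_le_rpow (ha _) (haN _) hε
  calc ∏ j, a j ^ (1 + ε)
      = (∏ i : Fin n, a i.castSucc ^ (1 + ε)) * a (Fin.last n) ^ ε * a (Fin.last n) := by
        rw [Fin.prod_univ_castSucc, Real.rpow_add_of_nonneg (ha _) zero_le_one hε, Real.rpow_one]
        ring
    _ ≤ N ^ (n * (1 + ε)) * N ^ ε * a (Fin.last n) := by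
        gcongr
        exacts [ha _, Real.rpow_nonneg (ha _) _]
    _ = N ^ (n + (n + 1) * ε) * a (Fin.last n) := by
        rw [← Real.rpow_add_of_nonneg hN (by positivity) hε]; ring_nf

lemma Real.volume_setOf_abs_add_mul_lt (c : ℝ) {b : ℝ} (hb : b ≠ 0) (r : ℝ) :
    volume {x : ℝ | |c + x * b| < r} = ENNReal.ofReal (2 * (r / |b|)) := by
  rw [← Real.volume_ball (-c / b)]
  congr 1
  ext x
  rw [mem_ofPred_eq, Metric.mem_ball, Real.dist_eq, lt_div_iff₀ (abs_pos.mpr hb), ← abs_mul,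
    show (x - -c / b) * b = c + x * b by field_simp; ring]

lemma ENNReal.tsum_fin_pi_prod {α : Type*} (f : α → ENNReal) (n : ℕ) :
    ∑' k : Fin n → α, ∏ i, f (k i) = (∑' a, f a) ^ n := by
  induction n with
  | zero => simp
  | succ n ih =>
    rw [← (Fin.consEquiv fun _ => α).tsum_eq, ENNReal.tsum_prod', pow_succ', ← ih,
      ← ENNReal.tsum_mul_right]
    refine tsum_congr fun a => ?_
    rw [← ENNReal.tsum_mul_left]
    refine tsum_congr fun k => ?_
    simp [Fin.consEquiv, Fin.prod_univ_succ]

lemma tsum_ofReal_max_abs_rpow_ne_top {s : ℝ} (hs : 1 < s) :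
    ∑' m : ℤ, ENNReal.ofReal (max |(m : ℝ)| 1 ^ (-s)) ≠ ⊤ := by
  have hsum : Summable fun m : ℤ => max |(m : ℝ)| 1 ^ (-s) := by
    refine (Real.summable_abs_int_rpow hs).congr_cofinite ?_
    filter_upwards [(Set.finite_singleton (0 : ℤ)).compl_mem_cofinite] with m hm
    rw [max_eq_left (by exact_mod_cast Int.one_le_abs hm)]
  rw [← ENNReal.ofReal_tsum_of_nonneg (fun m => by positivity) hsum]
  exact ENNReal.ofReal_ne_top

lemma ENNReal.eq_zero_of_forall_le_ofReal_mul {a M : ENNReal} (hM : M ≠ ⊤) {γ₀ : ℝ}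
    (hγ₀ : 0 < γ₀) (h : ∀ γ, 0 < γ → γ ≤ γ₀ → a ≤ ENNReal.ofReal γ * M) : a = 0 := by
  have hlim : Tendsto (fun γ => ENNReal.ofReal γ * M) (𝓝[>] 0) (𝓝 0) := by
    simpa using ENNReal.Tendsto.mul_const
      (ENNReal.tendsto_ofReal ((tendsto_id (x := 𝓝 (0 : ℝ))).mono_left nhdsWithin_le_nhds))
      (Or.inr hM)
  refine nonpos_iff_eq_zero.mp (ge_of_tendsto hlim ?_)
  filter_upwards [Ioc_mem_nhdsGT hγ₀] with γ hγ using h γ hγ.1 hγ.2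

lemma volume_setOf_abs_add_mul_last_lt_le_prod {e : ℕ} {τ ε γ : ℝ} (hε : 0 ≤ ε)
    (hτ : τ = e + (e + 1) * ε) (hγ : 0 ≤ γ) (c : ℝ) {K : Fin (e + 1) → ℤ}
    (hK : K (Fin.last e) ≠ 0) :
    volume {x : ℝ | |c + x * K (Fin.last e)| < γ / ‖K‖ ^ τ} ≤
      ENNReal.ofReal (2 * γ) * ∏ j, ENNReal.ofReal (max |(K j : ℝ)| 1 ^ (-(1 + ε))) := by
  set a : Fin (e + 1) → ℝ := fun j => max |(K j : ℝ)| 1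
  have ha : ∀ j, 1 ≤ a j := fun j => le_max_right _ _
  have hlast : a (Fin.last e) = |(K (Fin.last e) : ℝ)| :=
    max_eq_left (by exact_mod_cast Int.one_le_abs hK)
  have hK1 : 1 ≤ ‖K‖ := one_le_norm_of_int_ne_zero fun h => hK (by simp [h])
  have haK : ∀ j, a j ≤ ‖K‖ := fun j =>
    max_le (by simpa [Int.norm_eq_abs] using norm_le_pi_norm K j) hK1
  have hprod : ∏ j, a j ^ (1 + ε) ≤ ‖K‖ ^ τ * |(K (Fin.last e) : ℝ)| := by
    simpa [hτ, hlast] using prod_rpow_one_add_le (fun j => (zero_le_one.trans (ha j))) haK hε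
  have hpos : 0 < ∏ j, a j ^ (1 + ε) :=
    Finset.prod_pos fun j _ => Real.rpow_pos_of_pos (zero_lt_one.trans_le (ha j)) _
  rw [Real.volume_setOf_abs_add_mul_lt c (by exact_mod_cast hK),
    ← ENNReal.ofReal_prod_of_nonneg fun j _ => Real.rpow_nonneg (zero_le_one.trans (ha j)) _,
    ← ENNReal.ofReal_mul (by positivity)]
  refine ENNReal.ofReal_le_ofReal ?_
  calc 2 * (γ / ‖K‖ ^ τ / |(K (Fin.last e) : ℝ)|)
      = 2 * γ / (‖K‖ ^ τ * |(K (Fin.last e) : ℝ)|) := by rw [div_div, mul_div_assoc]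
    _ ≤ 2 * γ / ∏ j, a j ^ (1 + ε) := div_le_div_of_nonneg_left (by positivity) hpos hprod
    _ = 2 * γ * ∏ j, a j ^ (-(1 + ε)) := by
      rw [div_eq_mul_inv, ← Finset.prod_inv_distrib]
      congr 1
      exact Finset.prod_congr rfl fun j _ => (Real.rpow_neg (zero_le_one.trans (ha j)) _).symm

lemma exists_lt_of_not_diophVec_snoc {e : ℕ} {τ γ₀ γ : ℝ} {ω : Fin e → ℝ}
    (hω : ∀ k : Fin e → ℤ, k ≠ 0 → γ₀ / ‖k‖ ^ τ ≤ |∑ i, ω i * (k i : ℝ)|) (hτ : 0 ≤ τ)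
    (hγ : 0 < γ) (hγγ₀ : γ ≤ γ₀) {x : ℝ} (hx : ¬ DiophVec τ (Fin.snoc ω x : Fin (e + 1) → ℝ)) :
    ∃ K : Fin (e + 1) → ℤ, K (Fin.last e) ≠ 0 ∧
      |∑ i, ω i * (K i.castSucc : ℝ) + x * K (Fin.last e)| < γ / ‖K‖ ^ τ := by
  obtain ⟨K, hK0, hlt⟩ : ∃ K : Fin (e + 1) → ℤ, K ≠ 0 ∧
      |∑ i, (Fin.snoc ω x : Fin (e + 1) → ℝ) i * (K i : ℝ)| < γ / ‖K‖ ^ τ := by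
    unfold DiophVec at hx
    push Not at hx
    exact hx γ hγ
  rw [Fin.sum_univ_castSucc] at hlt
  simp only [Fin.snoc_castSucc, Fin.snoc_last] at hlt
  refine ⟨K, fun hlast => ?_, hlt⟩
  have hinit : Fin.init K ≠ 0 := fun h =>
    hK0 <| funext fun j => Fin.lastCases hlast (fun i => congr_fun h i) j
  have hnorm : ‖Fin.init K‖ ≤ ‖K‖ :=
    (pi_norm_le_iff_of_nonneg (norm_nonneg K)).mpr fun i => norm_le_pi_norm K i.castSucc
  have hγK : γ / ‖K‖ ^ τ ≤ γ₀ / ‖Fin.init K‖ ^ τ :=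
    div_le_div₀ (hγ.le.trans hγγ₀) hγγ₀ (by positivity)
      (Real.rpow_le_rpow (norm_nonneg _) hnorm hτ)
  simp only [hlast, Int.cast_zero, mul_zero, add_zero] at hlt
  exact (hγK.trans (hω _ hinit)).not_gt hlt

lemma volume_setOf_not_diophVec_snoc_le {e : ℕ} {τ ε γ₀ γ : ℝ} (hε : 0 ≤ ε)
    (hτ : τ = e + (e + 1) * ε) {ω : Fin e → ℝ}
    (hω : ∀ k : Fin e → ℤ, k ≠ 0 → γ₀ / ‖k‖ ^ τ ≤ |∑ i, ω i * (k i : ℝ)|)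
    (hγ : 0 < γ) (hγγ₀ : γ ≤ γ₀) :
    volume {x : ℝ | ¬ DiophVec τ (Fin.snoc ω x : Fin (e + 1) → ℝ)} ≤
      ENNReal.ofReal (2 * γ) *
        (∑' m : ℤ, ENNReal.ofReal (max |(m : ℝ)| 1 ^ (-(1 + ε)))) ^ (e + 1) := by
  have hτ0 : 0 ≤ τ := by rw [hτ]; positivity
  calc volume {x : ℝ | ¬ DiophVec τ (Fin.snoc ω x : Fin (e + 1) → ℝ)}
      ≤ volume (⋃ K : Fin (e + 1) → ℤ, {x : ℝ | K (Fin.last e) ≠ 0 ∧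
          |∑ i, ω i * (K i.castSucc : ℝ) + x * K (Fin.last e)| < γ / ‖K‖ ^ τ}) := by
        refine measure_mono fun x hx => ?_
        simpa using exists_lt_of_not_diophVec_snoc hω hτ0 hγ hγγ₀ hx
    _ ≤ ∑' K : Fin (e + 1) → ℤ, volume {x : ℝ | K (Fin.last e) ≠ 0 ∧
          |∑ i, ω i * (K i.castSucc : ℝ) + x * K (Fin.last e)| < γ / ‖K‖ ^ τ} :=
        measure_iUnion_le _
    _ ≤ ∑' K : Fin (e + 1) → ℤ, ENNReal.ofReal (2 * γ) *
          ∏ j, ENNReal.ofReal (max |(K j : ℝ)| 1 ^ (-(1 + ε))) := by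
        refine ENNReal.tsum_le_tsum fun K => ?_
        by_cases hK : K (Fin.last e) = 0
        · simp [hK]
        · simpa [hK] using volume_setOf_abs_add_mul_last_lt_le_prod hε hτ hγ.le _ hK
    _ = _ := by
        rw [ENNReal.tsum_mul_left,
          ENNReal.tsum_fin_pi_prod fun m : ℤ => ENNReal.ofReal (max |(m : ℝ)| 1 ^ (-(1 + ε)))]

theorem volume_setOf_not_diophVec_snoc {e : ℕ} {τ : ℝ} (hτ : (e : ℝ) < τ) {ω : Fin e → ℝ}
    (hω : DiophVec τ ω) :
    volume {x : ℝ | ¬ DiophVec τ (Fin.snoc ω x : Fin (e + 1) → ℝ)} = 0 := by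
  obtain ⟨γ₀, hγ₀, hω⟩ := hω
  set ε := (τ - e) / (e + 1)
  have hε : 0 < ε := div_pos (by linarith) (by positivity)
  have hτε : τ = e + (e + 1) * ε := by
    have : (e + 1 : ℝ) * ε = τ - e := mul_div_cancel₀ _ (by positivity)
    linarith
  have hM := tsum_ofReal_max_abs_rpow_ne_top (s := 1 + ε) (by linarith)
  refine ENNReal.eq_zero_of_forall_le_ofReal_mul
    (ENNReal.mul_ne_top (ENNReal.ofReal_ne_top (r := 2)) (ENNReal.pow_ne_top (n := e + 1) hM))
    hγ₀ fun γ hγ hγγ₀ => ?_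
  refine (volume_setOf_not_diophVec_snoc_le hε.le hτε hω hγ hγγ₀).trans_eq ?_
  rw [ENNReal.ofReal_mul zero_le_two]
  ring

/-- For any `d ≥ 2`, any `τ > d − 1` and any `ω̃ ∈ Ω^{d−1}_τ`,
Lebesgue-almost every `ω_d ∈ ℝ` satisfies `(ω̃, ω_d) ∈ Ω^d_τ`: the set of `ω_d`
for which `(ω̃, ω_d) ∉ Ω^d_τ` has Lebesgue measure zero. -/
theorem statement2 (d : ℕ) (hd : 2 ≤ d) (τ : ℝ) (hτ : (d : ℝ) - 1 < τ)
    (ω : Fin (d - 1) → ℝ) (hω : DiophVec τ ω) :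
    MeasureTheory.volume
      {x : ℝ | ¬ DiophVec τ (fun i : Fin d =>
        if h : (i : ℕ) < d - 1 then ω ⟨i, h⟩ else x)} = 0 := by
  obtain ⟨e, rfl⟩ : ∃ e, d = e + 1 := ⟨d - 1, by omega⟩
  have hsnoc : ∀ x : ℝ,
      (fun i : Fin (e + 1) => if h : (i : ℕ) < e + 1 - 1 then ω ⟨i, h⟩ else x) = Fin.snoc ω x :=
    fun x => funext fun i => Fin.lastCases (by simp) (fun i => by simp) i
  simp only [hsnoc]
  exact volume_setOf_not_diophVec_snoc (by push_cast at hτ; linarith) hω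
end
end

section
/- For any d ≥ 3 and any ω = (ω_1, …, ω_d) ∈ ℝ^d there exist a sequence of reals s_j with s_j → 0 and a sequence k_j ∈ ℤ^{d−1}∖{0} with ‖k_j‖ → ∞ such that Σ_{i=1}^{d−1} (ω_i + s_j^i) k_{j,i} = 0 for every j (i.e. ⟨ω̄̃(s_j), k_j⟩ = 0, where ω̄̃(s) = (ω_1 + s, ω_2 + s², …, ω_{d−1} + s^{d−1})). -/
/-!
Only the first two coordinates of `k` are nonzero: `k = (j + 1) • (den q, -num q, 0, …, 0)`
works as soon as `ω₁ + s = q (ω₂ + s²)` with `q` rational. Such `s` exist arbitrarily close to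
`0`, because `(ω₁ + s) / (ω₂ + s²)` is continuous and non-constant on small intervals `(0, η)`,
so it takes rational values there by the intermediate value theorem.
-/

open Filter Set Topology

open Polynomial in
theorem not_forall_add_eq_mul_add_sq {S : Set ℝ} (hS : S.Infinite) (A B c : ℝ) :
    ¬ ∀ s ∈ S, A + s = c * (B + s ^ 2) := by
  intro h
  set p : ℝ[X] := C c * X ^ 2 - X + C (c * B - A)
  have hp : p = 0 := eq_zero_of_infinite_isRoot p <| hS.mono fun s hs => by
    simp only [Set.mem_ofPred_eq, IsRoot, p, eval_add, eval_sub, eval_mul, eval_C, eval_pow, eval_X]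
    linear_combination -h s hs
  simpa [p] using congrArg (coeff · 1) hp

theorem IsPreconnected.exists_rat_eq {X : Type*} [TopologicalSpace X] {S : Set X} {f : X → ℝ}
    (hS : IsPreconnected S) (hf : ContinuousOn f S) {x y : X} (hx : x ∈ S) (hy : y ∈ S)
    (hxy : f x ≠ f y) : ∃ s ∈ S, ∃ q : ℚ, f s = q := by
  wlog h : f x < f y generalizing x y
  · exact this hy hx hxy.symm (hxy.lt_or_gt.resolve_left h)
  obtain ⟨q, hq⟩ := exists_rat_btwn h
  obtain ⟨s, hs, hfs⟩ := hS.intermediate_value hx hy hf ⟨hq.1.le, hq.2.le⟩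
  exact ⟨s, hs, q, hfs⟩

theorem eventually_add_sq_ne_zero (B : ℝ) : ∀ᶠ s in 𝓝[>] (0 : ℝ), B + s ^ 2 ≠ 0 := by
  rcases eq_or_ne B 0 with rfl | hB
  · filter_upwards [self_mem_nhdsWithin] with s hs
    simpa using (mem_Ioi.1 hs).ne'
  · have : Tendsto (fun s : ℝ => B + s ^ 2) (𝓝 0) (𝓝 B) :=
      (continuous_const.add (continuous_pow 2)).tendsto' 0 B (by simp)
    exact nhdsWithin_le_nhds (this.eventually_ne hB)

theorem frequently_exists_rat_add_eq_mul_add_sq (A B : ℝ) :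
    ∃ᶠ s in 𝓝[>] (0 : ℝ), ∃ q : ℚ, A + s = q * (B + s ^ 2) := by
  rw [frequently_iff]
  intro U hU
  obtain ⟨η, hη, hsub⟩ :=
    mem_nhdsGT_iff_exists_Ioo_subset.1 (inter_mem hU (eventually_add_sq_ne_zero B))
  have hden : ∀ s ∈ Ioo 0 η, B + s ^ 2 ≠ 0 := fun s hs => (hsub hs).2
  set f : ℝ → ℝ := fun s => (A + s) / (B + s ^ 2)
  have hf_mul : ∀ s ∈ Ioo 0 η, A + s = f s * (B + s ^ 2) := fun s hs =>
    (div_mul_cancel₀ _ (hden s hs)).symm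
  have hmid : η / 2 ∈ Ioo 0 η := ⟨half_pos hη, half_lt_self hη⟩
  obtain ⟨y, hy, hfy⟩ : ∃ y ∈ Ioo 0 η, f y ≠ f (η / 2) := by
    by_contra! hconst
    exact not_forall_add_eq_mul_add_sq (Ioo_infinite hη) A B (f (η / 2)) fun s hs => by
      rw [← hconst s hs]; exact hf_mul s hs
  have hf : ContinuousOn f (Ioo 0 η) := ContinuousOn.div (by fun_prop) (by fun_prop) hden
  obtain ⟨s, hs, q, hfs⟩ := isPreconnected_Ioo.exists_rat_eq hf hy hmid hfy
  exact ⟨s, (hsub hs).1, q, hfs ▸ hf_mul s hs⟩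

theorem sum_mul_intCast_single_sub_single {ι R : Type*} [Fintype ι] [DecidableEq ι] [CommRing R]
    (g : ι → R) (i j : ι) (a b : ℤ) :
    ∑ x, g x * ((Pi.single i a - Pi.single j b : ι → ℤ) x : R) = g i * a - g j * b := by
  simp [Pi.single_apply, mul_sub, Finset.sum_sub_distrib, apply_ite (Int.cast (R := R))]

theorem abs_le_norm_single_sub_single {ι : Type*} [Fintype ι] [DecidableEq ι] {i j : ι}
    (hij : i ≠ j) (a b : ℤ) : (|a| : ℝ) ≤ ‖(Pi.single i a - Pi.single j b : ι → ℤ)‖ := by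
  have := norm_le_pi_norm (Pi.single i a - Pi.single j b : ι → ℤ) i
  rw [Pi.sub_apply, Pi.single_eq_same, Pi.single_eq_of_ne hij, sub_zero, Int.norm_eq_abs] at this
  exact_mod_cast this

/-- For any `d ≥ 3` and any `ω ∈ ℝ^d` there exist a sequence of
reals `s_j → 0` and a sequence `k_j ∈ ℤ^{d−1} ∖ {0}` with `‖k_j‖ → ∞` such that
`⟨ω̄̃(s_j), k_j⟩ = Σ_{i=1}^{d−1} (ω_i + s_j^i) k_{j,i} = 0` for every `j`. -/
theorem statement9 (d : ℕ) (hd : 3 ≤ d) (ω : Fin d → ℝ) :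
    ∃ (s : ℕ → ℝ) (k : ℕ → Fin (d - 1) → ℤ),
      Tendsto s atTop (nhds 0) ∧
      (∀ j, k j ≠ 0) ∧
      Tendsto (fun j => ‖k j‖) atTop atTop ∧
      ∀ j, ∑ i : Fin (d - 1),
        (ω (Fin.castLE (Nat.sub_le d 1) i) + s j ^ ((i : ℕ) + 1)) * (k j i : ℝ) = 0 := by
  set i₀ : Fin (d - 1) := ⟨0, by omega⟩
  set i₁ : Fin (d - 1) := ⟨1, by omega⟩
  have h₀₁ : i₀ ≠ i₁ := by simp [i₀, i₁, Fin.ext_iff]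
  obtain ⟨s, hs, hq⟩ := frequently_iff_seq_forall.1 <| frequently_exists_rat_add_eq_mul_add_sq
    (ω (Fin.castLE (Nat.sub_le d 1) i₀)) (ω (Fin.castLE (Nat.sub_le d 1) i₁))
  choose q hq using hq
  set k : ℕ → Fin (d - 1) → ℤ := fun j =>
    Pi.single i₀ ((j + 1) * (q j).den) - Pi.single i₁ ((j + 1) * (q j).num)
  have hnorm : ∀ j : ℕ, (j : ℝ) + 1 ≤ ‖k j‖ := fun j => by
    refine le_trans ?_ (abs_le_norm_single_sub_single h₀₁ _ _)
    have hden : (1 : ℝ) ≤ (q j).den := by exact_mod_cast (q j).den_pos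
    push_cast
    rw [abs_of_nonneg (by positivity)]
    nlinarith
  refine ⟨s, k, tendsto_nhds_of_tendsto_nhdsWithin hs,
    fun j => norm_pos_iff.1 ((by positivity : (0 : ℝ) < j + 1).trans_le (hnorm j)),
    tendsto_atTop_mono hnorm (tendsto_atTop_add_const_right _ 1 tendsto_natCast_atTop_atTop),
    fun j => ?_⟩
  rw [sum_mul_intCast_single_sub_single]
  have hnum : (q j : ℝ) * (q j).den = (q j).num := by exact_mod_cast Rat.mul_den_eq_num (q j)
  simp only [i₀, i₁, zero_add, pow_one]
  push_cast
  linear_combination ((j + 1) * (q j).den : ℝ) * hq j +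
    ((j + 1) * (ω (Fin.castLE (Nat.sub_le d 1) i₁) + s j ^ 2) : ℝ) * hnum
end

section
/- Let d ≥ 3, ω̃ ∈ ℝ^{d−1}, and let k_j ∈ ℤ^{d−1}∖{0} (j ≥ 2) and positive reals u_j satisfy ‖k_j‖ ≥ j, u_j → ∞ and |⟨ω̃, k_j⟩| ≤ e^{−u_j ‖k_j‖} for all j. For (θ, r) ∈ ℂ^d × ℂ^d set f_j(θ, r) = ⟨ω̃, k_j⟩ · r_d^j · e^{‖k_j‖ r_d} · sin(2π⟨k_j, θ̃⟩), where θ̃ = (θ_1, …, θ_{d−1}) and sin and exp are the complex sine and exponential. Then the series Σ_{j≥2} f_j converges uniformly on every set {(θ, r) ∈ ℂ^d × ℂ^d : |Im θ_i| ≤ ρ and |r_i| ≤ Δ for all i} with Δ, ρ > 0; in particular its sum is an entire function on ℂ^d × ℂ^d, real-valued on ℝ^d × ℝ^d and ℤ^d-periodic in θ. -/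
/-!
On `{|Im θ_i| ≤ ρ, |r_i| ≤ Δ}` the bound `|sin w| ≤ e^{|Im w|}` gives
`|f_j| ≤ e^{-u_j ‖k_j‖} Δ^j e^{‖k_j‖ (Δ + 2π(d-1)ρ)}`. Since `‖k_j‖ ≥ j` and `u_j → ∞`, the
exponent is eventually at most `-‖k_j‖ ≤ -j`, so the series converges normally there.
Every ball around the origin lies in such a set, so by the Cauchy estimate the derivatives of
the terms are summably bounded on balls too, and the sum is entire. Reality and
periodicity hold term by term.
-/

open Real Filter Set

noncomputable section

/-- The term `f_j(θ, r) = ⟨ω̃, k_j⟩ r_d^j e^{‖k_j‖ r_d} sin(2π⟨k_j, θ̃⟩)` on `ℂ^d × ℂ^d`. -/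
def fTermL (d : ℕ) (hd : 0 < d) (ωt : Fin (d - 1) → ℝ) (k : ℕ → Fin (d - 1) → ℤ) (j : ℕ)
    (z : (Fin d → ℂ) × (Fin d → ℂ)) : ℂ :=
  ((∑ i, ωt i * (k j i : ℝ) : ℝ) : ℂ) *
    z.2 ⟨d - 1, Nat.sub_lt hd Nat.one_pos⟩ ^ j *
    Complex.exp ((‖k j‖ : ℂ) * z.2 ⟨d - 1, Nat.sub_lt hd Nat.one_pos⟩) *
    Complex.sin (((2 * π : ℝ) : ℂ) * ∑ i, (k j i : ℂ) * z.1 (Fin.castLE (Nat.sub_le d 1) i))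

lemma Complex.norm_sin_le_exp_abs_im (z : ℂ) : ‖Complex.sin z‖ ≤ Real.exp |z.im| := by
  have h₁ : ‖Complex.exp (-z * Complex.I)‖ = Real.exp z.im := by simp [Complex.norm_exp]
  have h₂ : ‖Complex.exp (z * Complex.I)‖ = Real.exp (-z.im) := by simp [Complex.norm_exp]
  calc ‖Complex.sin z‖
      = ‖Complex.exp (-z * Complex.I) - Complex.exp (z * Complex.I)‖ / 2 := by
        simp [Complex.sin]
    _ ≤ (Real.exp z.im + Real.exp (-z.im)) / 2 := by
        rw [← h₁, ← h₂]; gcongr; exact norm_sub_le _ _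
    _ ≤ Real.exp |z.im| := by
        linarith [Real.exp_le_exp.2 (le_abs_self z.im), Real.exp_le_exp.2 (neg_le_abs z.im)]

lemma abs_im_sum_intCast_mul_le {ι : Type*} [Fintype ι] (k : ι → ℤ) {z : ι → ℂ} {ρ : ℝ}
    (hz : ∀ i, |(z i).im| ≤ ρ) :
    |(∑ i, (k i : ℂ) * z i).im| ≤ Fintype.card ι * (‖k‖ * ρ) := by
  calc |(∑ i, (k i : ℂ) * z i).im|
      = |∑ i, (k i : ℝ) * (z i).im| := by simp [Complex.im_sum]
    _ ≤ ∑ i, |(k i : ℝ)| * |(z i).im| := by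
        simpa only [abs_mul] using Finset.abs_sum_le_sum_abs (fun i => (k i : ℝ) * (z i).im) _
    _ ≤ ∑ _i : ι, ‖k‖ * ρ := by
        have hk : ∀ i, |(k i : ℝ)| ≤ ‖k‖ := fun i => by
          simpa [Int.norm_eq_abs] using norm_le_pi_norm k i
        gcongr with i
        exacts [hk i, hz i]
    _ = Fintype.card ι * (‖k‖ * ρ) := by simp

lemma summable_exp_neg_mul_mul_pow_mul_exp {u K : ℕ → ℝ} (hK : ∀ j : ℕ, (j : ℝ) ≤ K j)
    (hu : Tendsto u atTop atTop) {a : ℝ} (ha : 0 ≤ a) (b : ℝ) :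
    Summable fun j => Real.exp (-(u j * K j)) * a ^ j * Real.exp (K j * b) := by
  set M := max a 1
  have hlogM : 0 ≤ Real.log M := Real.log_nonneg (le_max_right _ _)
  refine Summable.of_norm_bounded_eventually_nat Real.summable_exp_neg_nat ?_
  filter_upwards [hu.eventually_ge_atTop (b + Real.log M + 1)] with j hj
  have hK₀ : 0 ≤ K j := (Nat.cast_nonneg j).trans (hK j)
  have hpow : a ^ j ≤ Real.exp (K j * Real.log M) := by
    calc a ^ j ≤ M ^ j := by gcongr; exact le_max_left _ _
      _ = Real.exp (j * Real.log M) := by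
        rw [Real.exp_nat_mul, Real.exp_log (by positivity)]
      _ ≤ Real.exp (K j * Real.log M) := by gcongr; exact hK j
  rw [Real.norm_of_nonneg (by positivity)]
  calc Real.exp (-(u j * K j)) * a ^ j * Real.exp (K j * b)
      ≤ Real.exp (-(u j * K j)) * Real.exp (K j * Real.log M) * Real.exp (K j * b) := by
        gcongr
    _ = Real.exp (-(K j * (u j - b - Real.log M))) := by
        rw [← Real.exp_add, ← Real.exp_add]; ring_nf
    _ ≤ Real.exp (-j) := by
        gcongr
        nlinarith [hK j]

theorem Differentiable.tsum_of_forall_norm_le_on_ball {ι E F : Type*} [NormedAddCommGroup E]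
    [NormedSpace ℂ E] [NormedAddCommGroup F] [NormedSpace ℂ F] [CompleteSpace F]
    {f : ι → E → F} (hf : ∀ n, Differentiable ℂ (f n))
    (hbound : ∀ R > 0, ∃ u : ι → ℝ, Summable u ∧
      ∀ n, ∀ z ∈ Metric.ball (0 : E) R, ‖f n z‖ ≤ u n) :
    Differentiable ℂ fun z => ∑' n, f n z := by
  intro x
  obtain ⟨u, hu, hfu⟩ := hbound (‖x‖ + 2) (by positivity)
  have hx : x ∈ Metric.ball (0 : E) (‖x‖ + 1) := by simp
  -- Cauchy estimate: on `ball y 1 ⊆ ball 0 (‖x‖ + 2)` each `f n` moves by at most `2 u n`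
  have hderiv : ∀ n, ∀ y ∈ Metric.ball (0 : E) (‖x‖ + 1), ‖fderiv ℂ (f n) y‖ ≤ 2 * u n := by
    intro n y hy
    have hsub : Metric.ball y 1 ⊆ Metric.ball (0 : E) (‖x‖ + 2) := by
      intro w hw
      simp only [Metric.mem_ball, dist_zero_right] at hy hw ⊢
      linarith [norm_le_norm_add_norm_sub' w y, dist_eq_norm w y]
    have hy' : y ∈ Metric.ball (0 : E) (‖x‖ + 2) := hsub (Metric.mem_ball_self one_pos)
    simpa using Complex.norm_fderiv_le_div_of_mapsTo_ball (hf n).differentiableOn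
      (fun w hw => by
        rw [Metric.mem_closedBall, dist_eq_norm]
        linarith [norm_sub_le (f n w) (f n y), hfu n w (hsub hw), hfu n y hy'])
      one_pos
  exact (hasFDerivAt_tsum_of_isPreconnected (hu.mul_left 2) Metric.isOpen_ball
    (convex_ball _ _).isPreconnected (fun n y _ => (hf n y).hasFDerivAt) hderiv hx
    (hu.of_norm_bounded fun n => hfu n x (by simp)) hx).differentiableAt

def stripPolydisc (d : ℕ) (Δ ρ : ℝ) : Set ((Fin d → ℂ) × (Fin d → ℂ)) :=
  {z | (∀ i, |(z.1 i).im| ≤ ρ) ∧ ∀ i, ‖z.2 i‖ ≤ Δ}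

lemma ball_zero_subset_stripPolydisc (d : ℕ) (R : ℝ) :
    Metric.ball (0 : (Fin d → ℂ) × (Fin d → ℂ)) R ⊆ stripPolydisc d R R := by
  intro z hz
  rw [mem_ball_zero_iff] at hz
  exact ⟨fun i => (Complex.abs_im_le_norm _).trans
      ((norm_le_pi_norm z.1 i).trans ((norm_fst_le z).trans hz.le)),
    fun i => (norm_le_pi_norm z.2 i).trans ((norm_snd_le z).trans hz.le)⟩

section fTermL

variable {d : ℕ} (hd : 0 < d) (ωt : Fin (d - 1) → ℝ) (k : ℕ → Fin (d - 1) → ℤ)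

lemma norm_fTermL_le (j : ℕ) {ε Δ ρ : ℝ} (hε : |∑ i, ωt i * (k j i : ℝ)| ≤ ε)
    {z : (Fin d → ℂ) × (Fin d → ℂ)} (hz : z ∈ stripPolydisc d Δ ρ) :
    ‖fTermL d hd ωt k j z‖ ≤ ε * Δ ^ j * Real.exp (‖k j‖ * (Δ + 2 * π * (d - 1 : ℕ) * ρ)) := by
  obtain ⟨hθ, hr⟩ := hz
  set w := z.2 ⟨d - 1, Nat.sub_lt hd Nat.one_pos⟩
  set s := ∑ i, (k j i : ℂ) * z.1 (Fin.castLE (Nat.sub_le d 1) i)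
  have hexp : ‖Complex.exp (‖k j‖ * w)‖ ≤ Real.exp (‖k j‖ * Δ) := by
    rw [Complex.norm_exp, Complex.re_ofReal_mul]
    gcongr
    exact (Complex.re_le_norm w).trans (hr _)
  have hsin : ‖Complex.sin ((2 * π : ℝ) * s)‖ ≤ Real.exp (2 * π * ((d - 1 : ℕ) * (‖k j‖ * ρ))) := by
    refine (Complex.norm_sin_le_exp_abs_im _).trans (Real.exp_le_exp.2 ?_)
    rw [Complex.im_ofReal_mul, abs_mul, abs_of_pos (by positivity)]
    gcongr
    simpa only [Fintype.card_fin] using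
      abs_im_sum_intCast_mul_le (k j) (z := fun i => z.1 (Fin.castLE (Nat.sub_le d 1) i))
        fun i => hθ _
  calc ‖fTermL d hd ωt k j z‖
      = |∑ i, ωt i * (k j i : ℝ)| * ‖w‖ ^ j * ‖Complex.exp (‖k j‖ * w)‖
          * ‖Complex.sin ((2 * π : ℝ) * s)‖ := by
        simp only [fTermL, norm_mul, norm_pow, Complex.norm_real, Real.norm_eq_abs]; rfl
    _ ≤ ε * Δ ^ j * Real.exp (‖k j‖ * Δ) * Real.exp (2 * π * ((d - 1 : ℕ) * (‖k j‖ * ρ))) := by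
        have hε₀ : 0 ≤ ε := (abs_nonneg _).trans hε
        have hΔ : 0 ≤ Δ := (norm_nonneg w).trans (hr _)
        gcongr
        exact hr _
    _ = ε * Δ ^ j * Real.exp (‖k j‖ * (Δ + 2 * π * (d - 1 : ℕ) * ρ)) := by
        rw [mul_assoc _ (Real.exp _), ← Real.exp_add]; ring_nf

lemma exists_summable_bound_fTermL {u : ℕ → ℝ} (hkj : ∀ j : ℕ, (j : ℝ) ≤ ‖k j‖)
    (hu : Tendsto u atTop atTop)
    (hsmall : ∀ j, |∑ i, ωt i * (k j i : ℝ)| ≤ Real.exp (-(u j * ‖k j‖)))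
    {Δ : ℝ} (hΔ : 0 ≤ Δ) (ρ : ℝ) :
    ∃ v : ℕ → ℝ, Summable v ∧
      ∀ j, ∀ z ∈ stripPolydisc d Δ ρ, ‖fTermL d hd ωt k j z‖ ≤ v j :=
  ⟨_, summable_exp_neg_mul_mul_pow_mul_exp hkj hu hΔ _,
    fun j _ hz => norm_fTermL_le hd ωt k j (hsmall j) hz⟩

lemma differentiable_fTermL (j : ℕ) : Differentiable ℂ (fTermL d hd ωt k j) := by
  unfold fTermL
  fun_prop

lemma fTermL_add_intCast (j : ℕ) (θ r : Fin d → ℂ) (m : Fin d → ℤ) :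
    fTermL d hd ωt k j (θ + fun i => (m i : ℂ), r) = fTermL d hd ωt k j (θ, r) := by
  simp only [fTermL, Pi.add_apply, mul_add, Finset.sum_add_distrib]
  congr 1
  have hN : ((2 * π : ℝ) : ℂ) * ∑ i, (k j i : ℂ) * (m (Fin.castLE (Nat.sub_le d 1) i) : ℂ)
      = ((∑ i, k j i * m (Fin.castLE (Nat.sub_le d 1) i) : ℤ) : ℂ) * (2 * π) := by
    push_cast; ring
  rw [hN, Complex.sin_add_int_mul_two_pi]

lemma conj_fTermL_ofReal (j : ℕ) (θ r : Fin d → ℝ) :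
    (starRingEnd ℂ) (fTermL d hd ωt k j (fun i => (θ i : ℂ), fun i => (r i : ℂ)))
      = fTermL d hd ωt k j (fun i => (θ i : ℂ), fun i => (r i : ℂ)) := by
  simp [fTermL, ← Complex.exp_conj, ← Complex.sin_conj, map_ofNat]

end fTermL

/-- Let `d ≥ 3`, `ω̃ ∈ ℝ^{d−1}`, and let `k_j ∈ ℤ^{d−1} ∖ {0}` and
`u_j > 0` satisfy `‖k_j‖ ≥ j`, `u_j → ∞` and `|⟨ω̃, k_j⟩| ≤ e^{−u_j‖k_j‖}`. The
series `Σ_{j≥2} ⟨ω̃, k_j⟩ r_d^j e^{‖k_j‖ r_d} sin(2π⟨k_j, θ̃⟩)` converges uniformly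
on every set `{|Im θ_i| ≤ ρ, |r_i| ≤ Δ}` with `Δ, ρ > 0`; its sum is an entire
function, real-valued on `ℝ^d × ℝ^d` and `ℤ^d`-periodic in `θ`. -/
theorem statement13 (d : ℕ) (hd : 3 ≤ d) (ωt : Fin (d - 1) → ℝ)
    (k : ℕ → Fin (d - 1) → ℤ) (u : ℕ → ℝ)
    (hkj : ∀ j : ℕ, (j : ℝ) ≤ ‖k j‖)
    (hu : Tendsto u atTop atTop)
    (hsmall : ∀ j, |∑ i, ωt i * (k j i : ℝ)| ≤ Real.exp (-(u j * ‖k j‖))) :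
    ∃ F : (Fin d → ℂ) × (Fin d → ℂ) → ℂ,
      (∀ Δ ρ : ℝ, 0 < Δ → 0 < ρ →
        TendstoUniformlyOn
          (fun n z => ∑ j ∈ Finset.Ico 2 n, fTermL d (by omega) ωt k j z) F atTop
          {z : (Fin d → ℂ) × (Fin d → ℂ) |
            (∀ i, |(z.1 i).im| ≤ ρ) ∧ ∀ i, ‖z.2 i‖ ≤ Δ}) ∧
      Differentiable ℂ F ∧
      (∀ θ r : Fin d → ℝ, (F (fun i => (θ i : ℂ), fun i => (r i : ℂ))).im = 0) ∧
      (∀ (θ r : Fin d → ℝ) (m : Fin d → ℤ),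
        F (fun i => ((θ i + (m i : ℝ) : ℝ) : ℂ), fun i => (r i : ℂ)) =
          F (fun i => (θ i : ℂ), fun i => (r i : ℂ))) := by
  have hd' : 0 < d := by omega
  set f : ℕ → (Fin d → ℂ) × (Fin d → ℂ) → ℂ := fun j => fTermL d hd' ωt k (j + 2)
  have hbound : ∀ Δ ρ : ℝ, 0 ≤ Δ →
      ∃ v : ℕ → ℝ, Summable v ∧ ∀ j, ∀ z ∈ stripPolydisc d Δ ρ, ‖f j z‖ ≤ v j := by
    intro Δ ρ hΔ
    obtain ⟨v, hv, hfv⟩ := exists_summable_bound_fTermL hd' ωt k hkj hu hsmall hΔ ρ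
    exact ⟨fun j => v (j + 2), (summable_nat_add_iff 2).mpr hv, fun j => hfv (j + 2)⟩
  refine ⟨fun z => ∑' j, f j z, fun Δ ρ hΔ _ => ?_, ?_, fun θ r => ?_, fun θ r m => ?_⟩
  · obtain ⟨v, hv, hfv⟩ := hbound Δ ρ hΔ.le
    have hpartial : ∀ n z, ∑ j ∈ Finset.Ico 2 n, fTermL d hd' ωt k j z
        = ∑ j ∈ Finset.range (n - 2), f j z := fun n z => by
      simp only [Finset.sum_Ico_eq_sum_range, f, add_comm]
    simp only [hpartial]
    exact fun U hU =>
      (tendsto_sub_atTop_nat 2).eventually (tendstoUniformlyOn_tsum_nat hv hfv U hU)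
  · refine .tsum_of_forall_norm_le_on_ball (fun j => differentiable_fTermL hd' ωt k (j + 2))
      fun R hR => ?_
    obtain ⟨v, hv, hfv⟩ := hbound R R hR.le
    exact ⟨v, hv, fun j z hz => hfv j z (ball_zero_subset_stripPolydisc d R hz)⟩
  · have hre : ∀ j, f j (fun i => (θ i : ℂ), fun i => (r i : ℂ))
        = ((f j (fun i => (θ i : ℂ), fun i => (r i : ℂ))).re : ℂ) :=
      fun j => (Complex.conj_eq_iff_re.mp (conj_fTermL_ofReal ..)).symm
    simp only [tsum_congr hre, ← Complex.ofReal_tsum, Complex.ofReal_im]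
  · have hshift : (fun i => ((θ i + (m i : ℝ) : ℝ) : ℂ))
        = (fun i => (θ i : ℂ)) + fun i => (m i : ℂ) := by
      ext i; push_cast; rfl
    simp only [f, hshift, fTermL_add_intCast]
end
end
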